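/- arXiv:1409.3479 — 5 statements merged into one kernel-verified Lean document; each statement's English description precedes it below -/
import Mathlib

section
/- Let ∇ be a pseudoconnection on ξ with principal homomorphism P. Then the curvature form F^∇ is a tensor, i.e., F^∇ is an Ω⁰(M)-module homomorphism from Ω⁰(ξ) to Ω²(ξ): F^∇(f·s) = f·F^∇(s) for all f ∈ Ω⁰(M) and s ∈ Ω⁰(ξ). -/
/-!
Algebraic model of smooth forms with values in a vector bundle, following the paper's setup:
`R` plays the role of the ring `Ω⁰(M)` of smooth functions, `Ω k` of the `R`-module `Ω^k(M)`
of smooth `k`-forms, `S` of the `R`-module `Ω⁰(ξ)` of smooth sections of a vector bundle `ξ`,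
and `Ω k ⊗[R] S` of `Ω^k(ξ) = Ω^k(M) ⊗_{Ω⁰(M)} Ω⁰(ξ)`.  A bundle homomorphism over the
identity corresponds to an `R`-linear map `S →ₗ[R] S`; its induced action on `Ω^k(ξ)` is
`LinearMap.lTensor`.  `d0 : R →ₗ[ℝ] Ω 1` and `d k : Ω k →ₗ[ℝ] Ω (k+1)` model the exterior
derivative and `wedge` the wedge product of scalar forms.
-/

open TensorProduct

section PseudoConnections

variable {R : Type} [CommRing R] [Algebra ℝ R]
variable {Ω : ℕ → Type} [∀ k, AddCommGroup (Ω k)] [∀ k, Module R (Ω k)]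
  [∀ k, Module ℝ (Ω k)] [∀ k, IsScalarTower ℝ R (Ω k)]
variable {S : Type} [AddCommGroup S] [Module R S] [Module ℝ S] [IsScalarTower ℝ R S]

/-- The alternating product `β ∧_α ·  : Ω^l(ξ) → Ω^{k+l}(ξ)` induced by a bundle
homomorphism `α`, determined on generators by `β ∧_α (ω ⊗ s) = (β ∧ ω) ⊗ α s`.
Taking `α = LinearMap.id` gives the ordinary alternating product `∧`. -/
noncomputable def wedgeB (wedge : ∀ k l : ℕ, Ω k →ₗ[R] Ω l →ₗ[R] Ω (k + l))
    (k l : ℕ) (α : S →ₗ[R] S) (β : Ω k) : Ω l ⊗[R] S →ₗ[R] Ω (k + l) ⊗[R] S :=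
  LinearMap.rTensor S (wedge k l β) ∘ₗ LinearMap.lTensor (Ω l) α

/-- Cast between scalar form degrees. -/
noncomputable def mcast {a b : ℕ} (h : a = b) : Ω a ≃ₗ[ℝ] Ω b := by
  subst h; exact LinearEquiv.refl ℝ _

/-- Cast between bundle-valued form degrees. -/
noncomputable def ocast {a b : ℕ} (h : a = b) : Ω a ⊗[R] S ≃ₗ[ℝ] Ω b ⊗[R] S := by
  subst h; exact LinearEquiv.refl ℝ _

/-- `E^∇ = d^∇ ∘ ∇`. -/
noncomputable def Emap (nabla : S →ₗ[ℝ] Ω 1 ⊗[R] S)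
    (D : ∀ k, Ω k ⊗[R] S →ₗ[ℝ] Ω (k+1) ⊗[R] S) : S → Ω 2 ⊗[R] S :=
  fun s => D 1 (nabla s)

/-- `L^∇ = P ∘ ∇ − ∇ ∘ P`. -/
noncomputable def Lmap (P : S →ₗ[R] S) (nabla : S →ₗ[ℝ] Ω 1 ⊗[R] S) : S → Ω 1 ⊗[R] S :=
  fun s => LinearMap.lTensor (Ω 1) P (nabla s) - nabla (P s)

/-- The curvature form `F^∇ = P ∘ d^∇ ∘ ∇ − d^∇ ∘ P ∘ ∇ + d^∇ ∘ ∇ ∘ P`. -/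
noncomputable def Fmap (P : S →ₗ[R] S) (nabla : S →ₗ[ℝ] Ω 1 ⊗[R] S)
    (D : ∀ k, Ω k ⊗[R] S →ₗ[ℝ] Ω (k+1) ⊗[R] S) : S → Ω 2 ⊗[R] S :=
  fun s => LinearMap.lTensor (Ω 2) P (D 1 (nabla s)) - D 1 (LinearMap.lTensor (Ω 1) P (nabla s))
    + D 1 (nabla (P s))

/-- `G^∇ = d^∇ ∘ d^∇ ∘ ∇`. -/
noncomputable def Gmap (nabla : S →ₗ[ℝ] Ω 1 ⊗[R] S)
    (D : ∀ k, Ω k ⊗[R] S →ₗ[ℝ] Ω (k+1) ⊗[R] S) : S → Ω 3 ⊗[R] S :=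
  fun s => D 2 (D 1 (nabla s))


set_option linter.unusedSectionVars false in
lemma mcast_rfl {a : ℕ} (h : a = a) (x : Ω a) : mcast h x = x := rfl

set_option linter.unusedSectionVars false in
lemma wedgeB_apply (wedge : ∀ k l : ℕ, Ω k →ₗ[R] Ω l →ₗ[R] Ω (k + l))
    (k l : ℕ) (α : S →ₗ[R] S) (β : Ω k) (ω : Ω l) (s : S) :
    wedgeB wedge k l α β (ω ⊗ₜ[R] s) = (wedge k l β ω) ⊗ₜ[R] α s := rfl

set_option linter.unusedSectionVars false in
lemma wedgeB_smul (wedge : ∀ k l : ℕ, Ω k →ₗ[R] Ω l →ₗ[R] Ω (k + l))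
    (α : S →ₗ[R] S) (f : R) (β : Ω 1) (x : Ω 1 ⊗[R] S) :
    wedgeB wedge 1 1 α (f • β) x = f • wedgeB wedge 1 1 α β x := by
  induction x using TensorProduct.induction_on with
  | zero => simp
  | tmul ω s => simp [wedgeB_apply, map_smul, LinearMap.smul_apply, smul_tmul']
  | add x y hx hy => simp only [map_add, hx, hy, smul_add]

set_option linter.unusedSectionVars false in
lemma lTensor_wedgeB (wedge : ∀ k l : ℕ, Ω k →ₗ[R] Ω l →ₗ[R] Ω (k + l))
    (P α : S →ₗ[R] S) (β : Ω 1) (x : Ω 1 ⊗[R] S) :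
    LinearMap.lTensor (Ω 2) P (wedgeB wedge 1 1 α β x)
      = wedgeB wedge 1 1 (P ∘ₗ α) β x := by
  induction x using TensorProduct.induction_on with
  | zero => simp
  | tmul ω s => simp [wedgeB_apply, LinearMap.lTensor_tmul]
  | add x y hx hy => simp only [map_add, hx, hy]

set_option linter.unusedSectionVars false in
lemma wedgeB_lTensor (wedge : ∀ k l : ℕ, Ω k →ₗ[R] Ω l →ₗ[R] Ω (k + l))
    (α P : S →ₗ[R] S) (β : Ω 1) (x : Ω 1 ⊗[R] S) :
    wedgeB wedge 1 1 α β (LinearMap.lTensor (Ω 1) P x)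
      = wedgeB wedge 1 1 (α ∘ₗ P) β x := by
  induction x using TensorProduct.induction_on with
  | zero => simp
  | tmul ω s => simp [wedgeB_apply, LinearMap.lTensor_tmul]
  | add x y hx hy => simp only [map_add, hx, hy]

/-- If `∇` is a pseudoconnection on `ξ` with principal homomorphism `P`,
then the curvature form `F^∇` is a tensor, i.e. an `Ω⁰(M)`-module homomorphism
`Ω⁰(ξ) → Ω²(ξ)`:  `F^∇(f·s) = f·F^∇(s)`. -/
theorem curvature_form_is_tensorial
    (d0 : R →ₗ[ℝ] Ω 1) (d : ∀ k, Ω k →ₗ[ℝ] Ω (k+1))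
    (wedge : ∀ k l : ℕ, Ω k →ₗ[R] Ω l →ₗ[R] Ω (k + l))
    -- exterior-derivative axioms of the smooth context
    (hd_smul : ∀ (k : ℕ) (f : R) (ω : Ω k),
      d k (f • ω) = mcast (show 1 + k = k + 1 by omega) (wedge 1 k (d0 f) ω) + f • d k ω)
    (hdd0 : ∀ f : R, d 1 (d0 f) = 0)
    -- the pseudoconnection with principal homomorphism `P`
    (P : S →ₗ[R] S) (nabla : S →ₗ[ℝ] Ω 1 ⊗[R] S)
    (hLeib : ∀ (f : R) (s : S), nabla (f • s) = d0 f ⊗ₜ[R] P s + f • nabla s)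
    -- its exterior derivative, determined on generators
    (D : ∀ k, Ω k ⊗[R] S →ₗ[ℝ] Ω (k+1) ⊗[R] S)
    (hD : ∀ (k : ℕ) (ω : Ω k) (s : S),
      D k (ω ⊗ₜ[R] s) = d k ω ⊗ₜ[R] P s
        + ((-1:ℤ)^k) • wedgeB wedge k 1 LinearMap.id ω (nabla s)) :
    (∀ s t : S, Fmap P nabla D (s + t) = Fmap P nabla D s + Fmap P nabla D t) ∧
    (∀ (f : R) (s : S), Fmap P nabla D (f • s) = f • Fmap P nabla D s) := by
  have hA : ∀ (f : R) (x : Ω 1 ⊗[R] S),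
      D 1 (f • x) = wedgeB wedge 1 1 P (d0 f) x + f • D 1 x := by
    intro f x
    induction x using TensorProduct.induction_on with
    | zero => simp
    | tmul ω s =>
      rw [smul_tmul', hD, hD, hd_smul, mcast_rfl, wedgeB_smul]
      simp only [wedgeB_apply, pow_one, neg_one_zsmul, smul_add, smul_neg, smul_tmul',
        add_tmul]
      abel
    | add x y hx hy =>
      simp only [smul_add, map_add, hx, hy]
      abel
  constructor
  · intro s t
    simp only [Fmap, map_add]
    abel
  · intro f s
    have e1 : D 1 (nabla (f • s))
        = - wedgeB wedge 1 1 LinearMap.id (d0 f) (nabla (P s))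
          + (wedgeB wedge 1 1 P (d0 f) (nabla s) + f • D 1 (nabla s)) := by
      rw [hLeib, map_add, hD, hdd0, zero_tmul, hA]
      simp only [pow_one, neg_one_zsmul, zero_add]
    have e2 : D 1 (LinearMap.lTensor (Ω 1) P (nabla (f • s)))
        = - wedgeB wedge 1 1 LinearMap.id (d0 f) (nabla (P (P s)))
          + (wedgeB wedge 1 1 (P ∘ₗ P) (d0 f) (nabla s)
            + f • D 1 (LinearMap.lTensor (Ω 1) P (nabla s))) := by
      rw [hLeib, map_add, LinearMap.lTensor_tmul, map_smul, map_add, hD, hdd0, zero_tmul,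
        hA, wedgeB_lTensor]
      simp only [pow_one, neg_one_zsmul, zero_add]
    have e3 : D 1 (nabla (P (f • s)))
        = - wedgeB wedge 1 1 LinearMap.id (d0 f) (nabla (P (P s)))
          + (wedgeB wedge 1 1 P (d0 f) (nabla (P s)) + f • D 1 (nabla (P s))) := by
      rw [map_smul, hLeib, map_add, hD, hdd0, zero_tmul, hA]
      simp only [pow_one, neg_one_zsmul, zero_add]
    show LinearMap.lTensor (Ω 2) P (D 1 (nabla (f • s)))
        - D 1 (LinearMap.lTensor (Ω 1) P (nabla (f • s))) + D 1 (nabla (P (f • s)))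
      = f • (LinearMap.lTensor (Ω 2) P (D 1 (nabla s))
        - D 1 (LinearMap.lTensor (Ω 1) P (nabla s)) + D 1 (nabla (P s)))
    rw [e1, e2, e3, map_add, map_neg, map_add, lTensor_wedgeB, lTensor_wedgeB, map_smul,
      LinearMap.comp_id]
    module

end PseudoConnections
end

section
/- Let ∇ be a pseudoconnection on ξ with principal homomorphism P and let i ≥ 0. Then for every generator ω⊗s ∈ Ω^i(ξ), d^∇(d^∇(d^∇(ω⊗s))) = dω ∧ F^∇(s) + (−1)^i ω ∧ G^∇(s). -/
/-!
Algebraic model of smooth forms with values in a vector bundle, following the paper's setup: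
`R` plays the role of the ring `Ω⁰(M)` of smooth functions, `Ω k` of the `R`-module `Ω^k(M)`
of smooth `k`-forms, `S` of the `R`-module `Ω⁰(ξ)` of smooth sections of a vector bundle `ξ`,
and `Ω k ⊗[R] S` of `Ω^k(ξ) = Ω^k(M) ⊗_{Ω⁰(M)} Ω⁰(ξ)`.  A bundle homomorphism over the
identity corresponds to an `R`-linear map `S →ₗ[R] S`; its induced action on `Ω^k(ξ)` is
`LinearMap.lTensor`.  `d0 : R →ₗ[ℝ] Ω 1` and `d k : Ω k →ₗ[ℝ] Ω (k+1)` model the exterior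
derivative and `wedge` the wedge product of scalar forms.
-/

open TensorProduct

section PseudoConnections

variable {R : Type} [CommRing R] [Algebra ℝ R]
variable {Ω : ℕ → Type} [∀ k, AddCommGroup (Ω k)] [∀ k, Module R (Ω k)]
  [∀ k, Module ℝ (Ω k)] [∀ k, IsScalarTower ℝ R (Ω k)]
variable {S : Type} [AddCommGroup S] [Module R S] [Module ℝ S] [IsScalarTower ℝ R S]

/-!
The exterior derivative `d^∇` obeys a Leibniz rule for the wedge with a scalar form,
`d^∇(β ∧ t) = dβ ∧_P t + (-1)^k β ∧ d^∇ t`, where the twisted wedge `∧_P` appears because `d^∇`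
applies `P` to the section. Applied once to `d^∇(ω ⊗ s) = dω ⊗ P s + (-1)^i ω ∧ ∇s`, it gives
`d^∇d^∇(ω ⊗ s) = (-1)^i dω ∧ L^∇(s) + ω ∧ E^∇(s)`; applied once more, `d d ω = 0` leaves
`dω ∧ (P E^∇(s) - d^∇ L^∇(s)) + (-1)^i ω ∧ G^∇(s)`, and `P ∘ E^∇ - d^∇ ∘ L^∇ = F^∇`.
-/

def WedgeAssoc (wedge : ∀ k l : ℕ, Ω k →ₗ[R] Ω l →ₗ[R] Ω (k + l)) : Prop :=
  ∀ (k l m : ℕ) (ω : Ω k) (η : Ω l) (ζ : Ω m),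
    wedge (k+l) m (wedge k l ω η) ζ
      = mcast (Nat.add_assoc k l m).symm (wedge k (l+m) ω (wedge l m η ζ))

def IsGradedDerivation (d : ∀ k, Ω k →ₗ[ℝ] Ω (k+1))
    (wedge : ∀ k l : ℕ, Ω k →ₗ[R] Ω l →ₗ[R] Ω (k + l)) : Prop :=
  ∀ (k l : ℕ) (ω : Ω k) (η : Ω l),
    d (k+l) (wedge k l ω η)
      = mcast (Nat.add_right_comm k 1 l) (wedge (k+1) l (d k ω) η)
        + ((-1:ℤ)^k) • (show Ω (k+l+1) from wedge k (l+1) ω (d l η))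

def IsExteriorDerivative (d : ∀ k, Ω k →ₗ[ℝ] Ω (k+1))
    (wedge : ∀ k l : ℕ, Ω k →ₗ[R] Ω l →ₗ[R] Ω (k + l))
    (P : S →ₗ[R] S) (nabla : S →ₗ[ℝ] Ω 1 ⊗[R] S)
    (D : ∀ k, Ω k ⊗[R] S →ₗ[ℝ] Ω (k+1) ⊗[R] S) : Prop :=
  ∀ (k : ℕ) (ω : Ω k) (s : S),
    D k (ω ⊗ₜ[R] s) = d k ω ⊗ₜ[R] P s + ((-1:ℤ)^k) • wedgeB wedge k 1 LinearMap.id ω (nabla s)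

lemma neg_one_pow_mul_self (n : ℕ) : (-1:ℤ)^n * (-1)^n = 1 := by
  rw [← mul_pow]; norm_num

section Leibniz

variable {wedge : ∀ k l : ℕ, Ω k →ₗ[R] Ω l →ₗ[R] Ω (k + l)} {d : ∀ k, Ω k →ₗ[ℝ] Ω (k+1)}
  {P : S →ₗ[R] S} {nabla : S →ₗ[ℝ] Ω 1 ⊗[R] S} {D : ∀ k, Ω k ⊗[R] S →ₗ[ℝ] Ω (k+1) ⊗[R] S}

omit [IsScalarTower ℝ R S]

omit [Module ℝ S] in
lemma ocast_tmul {a b : ℕ} (h : a = b) (η : Ω a) (s : S) :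
    ocast h (η ⊗ₜ[R] s) = mcast h η ⊗ₜ[R] s := by
  subst h; rfl

omit [Module ℝ S] in
lemma ocast_self {a : ℕ} (h : a = a) (t : Ω a ⊗[R] S) : ocast h t = t := rfl

section Algebraic

omit [Algebra ℝ R] [∀ k, Module ℝ (Ω k)] [∀ k, IsScalarTower ℝ R (Ω k)] [Module ℝ S]
  [IsScalarTower ℝ R S]

lemma wedgeB_tmul (k l : ℕ) (α : S →ₗ[R] S) (β : Ω k) (η : Ω l) (s : S) :
    wedgeB wedge k l α β (η ⊗ₜ[R] s) = wedge k l β η ⊗ₜ[R] α s := by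
  simp [wedgeB]

lemma wedgeB_zero (k l : ℕ) (α : S →ₗ[R] S) : wedgeB wedge k l α (0 : Ω k) = 0 := by
  simp [wedgeB]

lemma wedgeB_eq_wedgeB_id_lTensor (k l : ℕ) (α : S →ₗ[R] S) (β : Ω k) (t : Ω l ⊗[R] S) :
    wedgeB wedge k l α β t = wedgeB wedge k l LinearMap.id β (LinearMap.lTensor (Ω l) α t) := by
  simp only [wedgeB, LinearMap.comp_apply, LinearMap.lTensor_id, LinearMap.id_apply]

end Algebraic

omit [Module ℝ S] in
lemma wedgeB_wedge (hassoc : WedgeAssoc wedge) (k l m : ℕ) (ω : Ω k) (η : Ω l)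
    (t : Ω m ⊗[R] S) :
    wedgeB wedge (k+l) m LinearMap.id (wedge k l ω η) t
      = ocast (Nat.add_assoc k l m).symm
          (wedgeB wedge k (l+m) LinearMap.id ω (wedgeB wedge l m LinearMap.id η t)) := by
  induction t using TensorProduct.induction_on with
  | zero => simp
  | tmul ζ s => rw [wedgeB_tmul, wedgeB_tmul, wedgeB_tmul, ocast_tmul, hassoc]; rfl
  | add x y hx hy => simp only [map_add, hx, hy]

lemma D_wedgeB (hd_wedge : IsGradedDerivation d wedge) (hassoc : WedgeAssoc wedge)
    (hD : IsExteriorDerivative d wedge P nabla D) (k l : ℕ) (ω : Ω k) (t : Ω l ⊗[R] S) :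
    D (k+l) (wedgeB wedge k l LinearMap.id ω t)
      = ocast (Nat.add_right_comm k 1 l) (wedgeB wedge (k+1) l P (d k ω) t)
        + ((-1:ℤ)^k) • wedgeB wedge k (l+1) LinearMap.id ω (D l t) := by
  induction t using TensorProduct.induction_on with
  | zero => simp
  | tmul η s =>
    rw [wedgeB_tmul, wedgeB_tmul, hD, hD, hd_wedge, wedgeB_wedge hassoc, ocast_self, ocast_tmul]
    simp only [LinearMap.id_apply, add_tmul, map_add, map_zsmul, wedgeB_tmul, smul_tmul',
      smul_add, pow_add, mul_smul, add_assoc]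
  | add x y hx hy =>
    simp only [map_add, hx, hy, smul_add]
    abel

lemma D_D_eq_wedgeB_Lmap_add_wedgeB_Emap (hdd : ∀ (k : ℕ) (ω : Ω k), d (k+1) (d k ω) = 0)
    (hd_wedge : IsGradedDerivation d wedge) (hassoc : WedgeAssoc wedge)
    (hD : IsExteriorDerivative d wedge P nabla D) (i : ℕ) (ω : Ω i) (s : S) :
    D (i+1) (D i (ω ⊗ₜ[R] s))
      = ((-1:ℤ)^i) • wedgeB wedge (i+1) 1 LinearMap.id (d i ω) (Lmap P nabla s)
        + wedgeB wedge i 2 LinearMap.id ω (Emap nabla D s) := by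
  rw [hD, map_add, map_zsmul, hD, hdd, zero_tmul, zero_add, D_wedgeB hd_wedge hassoc hD,
    ocast_self, wedgeB_eq_wedgeB_id_lTensor _ _ P]
  simp only [Lmap, Emap, map_sub, smul_sub, smul_add, smul_smul, neg_one_pow_mul_self, one_smul,
    pow_succ, mul_neg_one, neg_smul]
  abel

lemma Fmap_eq_lTensor_Emap_sub_D_Lmap (s : S) :
    Fmap P nabla D s = LinearMap.lTensor (Ω 2) P (Emap nabla D s) - D 1 (Lmap P nabla s) := by
  simp only [Fmap, Emap, Lmap, map_sub]
  abel

end Leibniz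

/-- For a pseudoconnection `∇` on `ξ` with principal homomorphism `P`
and `i ≥ 0`, on every generator `ω ⊗ s ∈ Ω^i(ξ)` one has
`d^∇(d^∇(d^∇(ω⊗s))) = dω ∧ F^∇(s) + (−1)^i ω ∧ G^∇(s)`. -/
theorem D_D_D_on_generators
    (d : ∀ k, Ω k →ₗ[ℝ] Ω (k+1))
    (wedge : ∀ k l : ℕ, Ω k →ₗ[R] Ω l →ₗ[R] Ω (k + l))
    -- axioms of the smooth context: `d∘d = 0`, graded Leibniz rule, associativity
    (hdd : ∀ (k : ℕ) (ω : Ω k), d (k+1) (d k ω) = 0)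
    (hd_wedge : ∀ (k l : ℕ) (ω : Ω k) (η : Ω l),
      d (k+l) (wedge k l ω η)
        = mcast (show (k+1)+l = (k+l)+1 by omega) (wedge (k+1) l (d k ω) η)
          + ((-1:ℤ)^k) • (show Ω (k+l+1) from wedge k (l+1) ω (d l η)))
    (hassoc : ∀ (k l m : ℕ) (ω : Ω k) (η : Ω l) (ζ : Ω m),
      wedge (k+l) m (wedge k l ω η) ζ
        = mcast (show k+(l+m) = (k+l)+m by omega) (wedge k (l+m) ω (wedge l m η ζ)))
    -- the pseudoconnection with principal homomorphism `P`
    (P : S →ₗ[R] S) (nabla : S →ₗ[ℝ] Ω 1 ⊗[R] S)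
    -- its exterior derivative, determined on generators
    (D : ∀ k, Ω k ⊗[R] S →ₗ[ℝ] Ω (k+1) ⊗[R] S)
    (hD : ∀ (k : ℕ) (ω : Ω k) (s : S),
      D k (ω ⊗ₜ[R] s) = d k ω ⊗ₜ[R] P s
        + ((-1:ℤ)^k) • wedgeB wedge k 1 LinearMap.id ω (nabla s)) :
    ∀ (i : ℕ) (ω : Ω i) (s : S),
      D (i+2) (D (i+1) (D i (ω ⊗ₜ[R] s)))
        = wedgeB wedge (i+1) 2 LinearMap.id (d i ω) (Fmap P nabla D s)
          + ((-1:ℤ)^i) • wedgeB wedge i 3 LinearMap.id ω (Gmap nabla D s) := by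
  intro i ω s
  rw [D_D_eq_wedgeB_Lmap_add_wedgeB_Emap hdd hd_wedge hassoc hD, map_add, map_zsmul,
    D_wedgeB hd_wedge hassoc hD]
  erw [D_wedgeB hd_wedge hassoc hD (i+1) 1]
  rw [hdd, wedgeB_zero, ocast_self, ocast_self,
    Fmap_eq_lTensor_Emap_sub_D_Lmap, Gmap, wedgeB_eq_wedgeB_id_lTensor _ _ P]
  simp only [LinearMap.zero_apply, zero_add, smul_neg, smul_smul, pow_succ, mul_neg,
    mul_one, neg_one_pow_mul_self, one_smul, neg_smul, map_sub]
  abel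

end PseudoConnections
end

section
/- Let ∇ be a pseudoconnection on ξ with principal homomorphism P, and let X, Y be smooth vector fields on M. Then for every s ∈ Ω⁰(ξ), Ev_{X,Y}(d^∇(∇s)) = ∇_X∇_Y s − ∇_Y∇_X s − P(∇_{[X,Y]} s). -/
/-!
Algebraic model of smooth forms with values in a vector bundle, following the paper's setup:
`R` plays the role of the ring `Ω⁰(M)` of smooth functions, `Ω k` of the `R`-module `Ω^k(M)`
of smooth `k`-forms, `S` of the `R`-module `Ω⁰(ξ)` of smooth sections of a vector bundle `ξ`,
and `Ω k ⊗[R] S` of `Ω^k(ξ) = Ω^k(M) ⊗_{Ω⁰(M)} Ω⁰(ξ)`.  A bundle homomorphism over the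
identity corresponds to an `R`-linear map `S →ₗ[R] S`; its induced action on `Ω^k(ξ)` is
`LinearMap.lTensor`.  `d0 : R →ₗ[ℝ] Ω 1` and `d k : Ω k →ₗ[ℝ] Ω (k+1)` model the exterior
derivative and `wedge` the wedge product of scalar forms.
-/

open TensorProduct

section PseudoConnections

variable {R : Type} [CommRing R] [Algebra ℝ R]
variable {Ω : ℕ → Type} [∀ k, AddCommGroup (Ω k)] [∀ k, Module R (Ω k)]
  [∀ k, Module ℝ (Ω k)] [∀ k, IsScalarTower ℝ R (Ω k)]
variable {S : Type} [AddCommGroup S] [Module R S] [Module ℝ S] [IsScalarTower ℝ R S]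

variable {χ : Type}  -- the set `χ^∞(M)` of smooth vector fields on `M`

/-- The evaluation map `Ev_X : Ω¹(ξ) → Ω⁰(ξ)`, `Ev_X(ω ⊗ s) = ω(X)·s`, induced by the
evaluation `ev1 X : Ω¹(M) → Ω⁰(M)` of `1`-forms on a vector field `X`. -/
noncomputable def Ev1 (ev1 : χ → Ω 1 →ₗ[R] R) (X : χ) : Ω 1 ⊗[R] S →ₗ[R] S :=
  (TensorProduct.lid R S).toLinearMap ∘ₗ LinearMap.rTensor S (ev1 X)

/-- The evaluation map `Ev_{X,Y} : Ω²(ξ) → Ω⁰(ξ)`, `Ev_{X,Y}(ω ⊗ s) = ω(X,Y)·s`, induced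
by the evaluation `ev2 X Y : Ω²(M) → Ω⁰(M)` of `2`-forms on vector fields `X, Y`. -/
noncomputable def Ev2 (ev2 : χ → χ → Ω 2 →ₗ[R] R) (X Y : χ) : Ω 2 ⊗[R] S →ₗ[R] S :=
  (TensorProduct.lid R S).toLinearMap ∘ₗ LinearMap.rTensor S (ev2 X Y)

/-- The covariant derivative `∇_X s = Ev_X(∇ s)`. -/
noncomputable def nablaOn (ev1 : χ → Ω 1 →ₗ[R] R) (nabla : S →ₗ[ℝ] Ω 1 ⊗[R] S)
    (X : χ) (s : S) : S :=
  Ev1 ev1 X (nabla s)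

/-- For a pseudoconnection `∇` on `ξ` with principal homomorphism `P`,
vector fields `X, Y` and any `s ∈ Ω⁰(ξ)`,
`Ev_{X,Y}(d^∇(∇s)) = ∇_X∇_Y s − ∇_Y∇_X s − P(∇_{[X,Y]} s)`. -/
theorem Ev_D_nabla
    (d0 : R →ₗ[ℝ] Ω 1) (d : ∀ k, Ω k →ₗ[ℝ] Ω (k+1))
    (wedge : ∀ k l : ℕ, Ω k →ₗ[R] Ω l →ₗ[R] Ω (k + l))
    -- vector fields: evaluation of scalar forms, derivation action and Lie bracket
    (ev1 : χ → Ω 1 →ₗ[R] R) (ev2 : χ → χ → Ω 2 →ₗ[R] R)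
    (Xact : χ → R → R) (bracket : χ → χ → χ)
    (hXdf : ∀ (X : χ) (f : R), ev1 X (d0 f) = Xact X f)
    (hcartan : ∀ (X Y : χ) (ω : Ω 1),
      ev2 X Y (d 1 ω) = Xact X (ev1 Y ω) - Xact Y (ev1 X ω) - ev1 (bracket X Y) ω)
    (hevw : ∀ (X Y : χ) (ω η : Ω 1),
      ev2 X Y (wedge 1 1 ω η) = ev1 X ω * ev1 Y η - ev1 Y ω * ev1 X η)
    -- the pseudoconnection with principal homomorphism `P`
    (P : S →ₗ[R] S) (nabla : S →ₗ[ℝ] Ω 1 ⊗[R] S)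
    (hLeib : ∀ (f : R) (s : S), nabla (f • s) = d0 f ⊗ₜ[R] P s + f • nabla s)
    -- its exterior derivative, determined on generators
    (D : ∀ k, Ω k ⊗[R] S →ₗ[ℝ] Ω (k+1) ⊗[R] S)
    (hD : ∀ (k : ℕ) (ω : Ω k) (s : S),
      D k (ω ⊗ₜ[R] s) = d k ω ⊗ₜ[R] P s
        + ((-1:ℤ)^k) • wedgeB wedge k 1 LinearMap.id ω (nabla s))
    : ∀ (X Y : χ) (s : S),
      Ev2 ev2 X Y (D 1 (nabla s))
        = nablaOn ev1 nabla X (nablaOn ev1 nabla Y s)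
          - nablaOn ev1 nabla Y (nablaOn ev1 nabla X s)
          - P (nablaOn ev1 nabla (bracket X Y) s) := by
  intro X Y s
  have aux : ∀ (ω : Ω 1) (t : Ω 1 ⊗[R] S),
      Ev2 ev2 X Y (LinearMap.rTensor S ((wedge 1 1) ω) t)
        = ev1 X ω • Ev1 ev1 Y t - ev1 Y ω • Ev1 ev1 X t := by
    intro ω t
    induction t using TensorProduct.induction_on with
    | zero => simp
    | tmul η u =>
        simp [Ev2, Ev1, hevw, sub_smul, mul_smul]
    | add a b ha hb =>
        simp only [map_add, ha, hb, smul_add]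
        abel
  have main : ∀ t : Ω 1 ⊗[R] S,
      Ev2 ev2 X Y (D 1 t)
        = Ev1 ev1 X (nabla (Ev1 ev1 Y t)) - Ev1 ev1 Y (nabla (Ev1 ev1 X t))
          - P (Ev1 ev1 (bracket X Y) t) := by
    intro t
    induction t using TensorProduct.induction_on with
    | zero => simp
    | tmul ω u =>
        have hw : wedgeB (Ω := Ω) (S := S) wedge 1 1 LinearMap.id ω (nabla u)
            = LinearMap.rTensor S ((wedge 1 1) ω) (nabla u) := by
          simp [wedgeB]
        have hEv1 : ∀ (Z : χ), Ev1 (S := S) ev1 Z (ω ⊗ₜ[R] u) = ev1 Z ω • u := by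
          intro Z; simp [Ev1]
        rw [hD, hw]
        simp only [pow_one, neg_one_zsmul, map_add, map_neg, aux, hEv1, hLeib, map_smul,
          map_add]
        have hEv2d : Ev2 (S := S) ev2 X Y (d 1 ω ⊗ₜ[R] P u) = ev2 X Y (d 1 ω) • P u := by
          simp [Ev2]
        have hEv1d : ∀ (Z : χ) (f : R),
            Ev1 (S := S) ev1 Z (d0 f ⊗ₜ[R] P u) = Xact Z f • P u := by
          intro Z f; simp [Ev1, hXdf]
        rw [hEv2d, hEv1d, hEv1d, hcartan]
        simp only [sub_smul]
        abel
    | add a b ha hb =>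
        simp only [map_add, ha, hb]
        abel
  simpa [nablaOn] using main (nabla s)


end PseudoConnections
end

section
/- Let ∇ be a pseudoconnection on ξ with principal homomorphism P, and let X, Y be smooth vector fields on M. Then for every s ∈ Ω⁰(ξ), Ev_{X,Y}(d^∇(P(∇s))) = ∇_X P(∇_Y s) − ∇_Y P(∇_X s) − P²(∇_{[X,Y]} s). -/
/-!
Algebraic model of smooth forms with values in a vector bundle, following the paper's setup:
`R` plays the role of the ring `Ω⁰(M)` of smooth functions, `Ω k` of the `R`-module `Ω^k(M)`
of smooth `k`-forms, `S` of the `R`-module `Ω⁰(ξ)` of smooth sections of a vector bundle `ξ`,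
and `Ω k ⊗[R] S` of `Ω^k(ξ) = Ω^k(M) ⊗_{Ω⁰(M)} Ω⁰(ξ)`.  A bundle homomorphism over the
identity corresponds to an `R`-linear map `S →ₗ[R] S`; its induced action on `Ω^k(ξ)` is
`LinearMap.lTensor`.  `d0 : R →ₗ[ℝ] Ω 1` and `d k : Ω k →ₗ[ℝ] Ω (k+1)` model the exterior
derivative and `wedge` the wedge product of scalar forms.
-/

open TensorProduct

section PseudoConnections

variable {R : Type} [CommRing R] [Algebra ℝ R]
variable {Ω : ℕ → Type} [∀ k, AddCommGroup (Ω k)] [∀ k, Module R (Ω k)]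
  [∀ k, Module ℝ (Ω k)] [∀ k, IsScalarTower ℝ R (Ω k)]
variable {S : Type} [AddCommGroup S] [Module R S] [Module ℝ S] [IsScalarTower ℝ R S]

variable {χ : Type}  -- the set `χ^∞(M)` of smooth vector fields on `M`

lemma Ev1_tmul (ev1 : χ → Ω 1 →ₗ[R] R) (X : χ) (ω : Ω 1) (t : S) :
    Ev1 ev1 X (ω ⊗ₜ[R] t) = ev1 X ω • t := by
  simp [Ev1]

lemma Ev2_tmul (ev2 : χ → χ → Ω 2 →ₗ[R] R) (X Y : χ) (ω : Ω 2) (t : S) :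
    Ev2 ev2 X Y (ω ⊗ₜ[R] t) = ev2 X Y ω • t := by
  simp [Ev2]

lemma Ev2_wedgeB (wedge : ∀ k l : ℕ, Ω k →ₗ[R] Ω l →ₗ[R] Ω (k + l))
    (ev1 : χ → Ω 1 →ₗ[R] R) (ev2 : χ → χ → Ω 2 →ₗ[R] R)
    (hevw : ∀ (X Y : χ) (ω η : Ω 1),
      ev2 X Y (wedge 1 1 ω η) = ev1 X ω * ev1 Y η - ev1 Y ω * ev1 X η)
    (X Y : χ) (ω : Ω 1) (v : Ω 1 ⊗[R] S) :
    Ev2 ev2 X Y (wedgeB wedge 1 1 LinearMap.id ω v)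
      = ev1 X ω • Ev1 ev1 Y v - ev1 Y ω • Ev1 ev1 X v := by
  induction v using TensorProduct.induction_on with
  | zero => simp
  | tmul η t =>
      simp only [wedgeB, LinearMap.coe_comp, Function.comp_apply,
        LinearMap.lTensor_tmul, LinearMap.id_coe, id_eq, LinearMap.rTensor_tmul,
        Ev2_tmul, Ev1_tmul, hevw, sub_smul, mul_smul]
  | add x y hx hy =>
      simp only [map_add, hx, hy, smul_add]
      abel

/-- For a pseudoconnection `∇` on `ξ` with principal homomorphism `P`,
vector fields `X, Y` and any `s ∈ Ω⁰(ξ)`,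
`Ev_{X,Y}(d^∇(P(∇s))) = ∇_X P(∇_Y s) − ∇_Y P(∇_X s) − P²(∇_{[X,Y]} s)`. -/
theorem Ev_D_P_nabla
    (d0 : R →ₗ[ℝ] Ω 1) (d : ∀ k, Ω k →ₗ[ℝ] Ω (k+1))
    (wedge : ∀ k l : ℕ, Ω k →ₗ[R] Ω l →ₗ[R] Ω (k + l))
    -- vector fields: evaluation of scalar forms, derivation action and Lie bracket
    (ev1 : χ → Ω 1 →ₗ[R] R) (ev2 : χ → χ → Ω 2 →ₗ[R] R)
    (Xact : χ → R → R) (bracket : χ → χ → χ)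
    (hXdf : ∀ (X : χ) (f : R), ev1 X (d0 f) = Xact X f)
    (hcartan : ∀ (X Y : χ) (ω : Ω 1),
      ev2 X Y (d 1 ω) = Xact X (ev1 Y ω) - Xact Y (ev1 X ω) - ev1 (bracket X Y) ω)
    (hevw : ∀ (X Y : χ) (ω η : Ω 1),
      ev2 X Y (wedge 1 1 ω η) = ev1 X ω * ev1 Y η - ev1 Y ω * ev1 X η)
    -- the pseudoconnection with principal homomorphism `P`
    (P : S →ₗ[R] S) (nabla : S →ₗ[ℝ] Ω 1 ⊗[R] S)
    (hLeib : ∀ (f : R) (s : S), nabla (f • s) = d0 f ⊗ₜ[R] P s + f • nabla s)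
    -- its exterior derivative, determined on generators
    (D : ∀ k, Ω k ⊗[R] S →ₗ[ℝ] Ω (k+1) ⊗[R] S)
    (hD : ∀ (k : ℕ) (ω : Ω k) (s : S),
      D k (ω ⊗ₜ[R] s) = d k ω ⊗ₜ[R] P s
        + ((-1:ℤ)^k) • wedgeB wedge k 1 LinearMap.id ω (nabla s))
    : ∀ (X Y : χ) (s : S),
      Ev2 ev2 X Y (D 1 (LinearMap.lTensor (Ω 1) P (nabla s)))
        = nablaOn ev1 nabla X (P (nablaOn ev1 nabla Y s))
          - nablaOn ev1 nabla Y (P (nablaOn ev1 nabla X s))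
          - P (P (nablaOn ev1 nabla (bracket X Y) s)) := by
  intro X Y s
  simp only [nablaOn]
  generalize nabla s = u
  induction u using TensorProduct.induction_on with
  | zero => simp
  | tmul ω t =>
      simp only [LinearMap.lTensor_tmul, hD, pow_one, neg_smul, one_smul, map_add, map_neg,
        Ev2_tmul, Ev2_wedgeB wedge ev1 ev2 hevw, Ev1_tmul, map_smul, hcartan, hLeib, hXdf,
        LinearMap.map_smul_of_tower]
      simp only [sub_smul]
      module
  | add x y hx hy =>
      simp only [map_add, hx, hy]
      abel

end PseudoConnections
end

section
/- Let ∇ be a pseudoconnection on ξ with principal homomorphism P. Then for all smooth vector fields X, Y on M and all s ∈ Ω⁰(ξ): F^∇_{X,Y}(s) = ∇_X∇_Y(Ps) − ∇_Y∇_X(Ps) − ∇_X P(∇_Y s) + P(∇_X∇_Y s) + ∇_Y P(∇_X s) − P(∇_Y∇_X s) − P(∇_{[X,Y]} P(s)). -/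
/-!
Algebraic model of smooth forms with values in a vector bundle, following the paper's setup:
`R` plays the role of the ring `Ω⁰(M)` of smooth functions, `Ω k` of the `R`-module `Ω^k(M)`
of smooth `k`-forms, `S` of the `R`-module `Ω⁰(ξ)` of smooth sections of a vector bundle `ξ`,
and `Ω k ⊗[R] S` of `Ω^k(ξ) = Ω^k(M) ⊗_{Ω⁰(M)} Ω⁰(ξ)`.  A bundle homomorphism over the
identity corresponds to an `R`-linear map `S →ₗ[R] S`; its induced action on `Ω^k(ξ)` is
`LinearMap.lTensor`.  `d0 : R →ₗ[ℝ] Ω 1` and `d k : Ω k →ₗ[ℝ] Ω (k+1)` model the exterior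
derivative and `wedge` the wedge product of scalar forms.
-/

open TensorProduct

section PseudoConnections

variable {R : Type} [CommRing R] [Algebra ℝ R]
variable {Ω : ℕ → Type} [∀ k, AddCommGroup (Ω k)] [∀ k, Module R (Ω k)]
  [∀ k, Module ℝ (Ω k)] [∀ k, IsScalarTower ℝ R (Ω k)]
variable {S : Type} [AddCommGroup S] [Module R S] [Module ℝ S] [IsScalarTower ℝ R S]

variable {χ : Type}  -- the set `χ^∞(M)` of smooth vector fields on `M`

lemma Ev1_lTensor (ev1 : χ → Ω 1 →ₗ[R] R) (P : S →ₗ[R] S) (X : χ) (u : Ω 1 ⊗[R] S) :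
    Ev1 ev1 X (LinearMap.lTensor (Ω 1) P u) = P (Ev1 ev1 X u) := by
  induction u using TensorProduct.induction_on with
  | zero => simp
  | tmul ω s => simp [Ev1]
  | add a b ha hb => simp [ha, hb]

lemma Ev2_lTensor (ev2 : χ → χ → Ω 2 →ₗ[R] R) (P : S →ₗ[R] S) (X Y : χ)
    (u : Ω 2 ⊗[R] S) :
    Ev2 ev2 X Y (LinearMap.lTensor (Ω 2) P u) = P (Ev2 ev2 X Y u) := by
  induction u using TensorProduct.induction_on with
  | zero => simp
  | tmul ω s => simp [Ev2]
  | add a b ha hb => simp [ha, hb]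

lemma nablaOn_smul (d0 : R →ₗ[ℝ] Ω 1) (ev1 : χ → Ω 1 →ₗ[R] R) (Xact : χ → R → R)
    (hXdf : ∀ (X : χ) (f : R), ev1 X (d0 f) = Xact X f)
    (P : S →ₗ[R] S) (nabla : S →ₗ[ℝ] Ω 1 ⊗[R] S)
    (hLeib : ∀ (f : R) (s : S), nabla (f • s) = d0 f ⊗ₜ[R] P s + f • nabla s)
    (X : χ) (f : R) (s : S) :
    nablaOn ev1 nabla X (f • s) = Xact X f • P s + f • nablaOn ev1 nabla X s := by
  simp only [nablaOn, hLeib, map_add, map_smul]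
  congr 1
  simp [Ev1, hXdf]

lemma Ev2_rTensor_wedge (wedge : ∀ k l : ℕ, Ω k →ₗ[R] Ω l →ₗ[R] Ω (k + l))
    (ev1 : χ → Ω 1 →ₗ[R] R) (ev2 : χ → χ → Ω 2 →ₗ[R] R)
    (hevw : ∀ (X Y : χ) (ω η : Ω 1),
      ev2 X Y (wedge 1 1 ω η) = ev1 X ω * ev1 Y η - ev1 Y ω * ev1 X η)
    (X Y : χ) (ω : Ω 1) (v : Ω 1 ⊗[R] S) :
    Ev2 ev2 X Y (LinearMap.rTensor S (wedge 1 1 ω) v)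
      = ev1 X ω • Ev1 ev1 Y v - ev1 Y ω • Ev1 ev1 X v := by
  induction v using TensorProduct.induction_on with
  | zero => simp
  | tmul η t => simp [Ev1, Ev2, hevw, sub_smul, mul_smul]
  | add a b ha hb =>
      simp only [map_add, ha, hb, smul_add]; abel

lemma Ev2_D1 (d0 : R →ₗ[ℝ] Ω 1) (d : ∀ k, Ω k →ₗ[ℝ] Ω (k+1))
    (wedge : ∀ k l : ℕ, Ω k →ₗ[R] Ω l →ₗ[R] Ω (k + l))
    (ev1 : χ → Ω 1 →ₗ[R] R) (ev2 : χ → χ → Ω 2 →ₗ[R] R)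
    (Xact : χ → R → R) (bracket : χ → χ → χ)
    (hXdf : ∀ (X : χ) (f : R), ev1 X (d0 f) = Xact X f)
    (hcartan : ∀ (X Y : χ) (ω : Ω 1),
      ev2 X Y (d 1 ω) = Xact X (ev1 Y ω) - Xact Y (ev1 X ω) - ev1 (bracket X Y) ω)
    (hevw : ∀ (X Y : χ) (ω η : Ω 1),
      ev2 X Y (wedge 1 1 ω η) = ev1 X ω * ev1 Y η - ev1 Y ω * ev1 X η)
    (P : S →ₗ[R] S) (nabla : S →ₗ[ℝ] Ω 1 ⊗[R] S)
    (hLeib : ∀ (f : R) (s : S), nabla (f • s) = d0 f ⊗ₜ[R] P s + f • nabla s)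
    (D : ∀ k, Ω k ⊗[R] S →ₗ[ℝ] Ω (k+1) ⊗[R] S)
    (hD : ∀ (k : ℕ) (ω : Ω k) (s : S),
      D k (ω ⊗ₜ[R] s) = d k ω ⊗ₜ[R] P s
        + ((-1:ℤ)^k) • wedgeB wedge k 1 LinearMap.id ω (nabla s))
    (X Y : χ) (u : Ω 1 ⊗[R] S) :
    Ev2 ev2 X Y (D 1 u)
      = nablaOn ev1 nabla X (Ev1 ev1 Y u) - nablaOn ev1 nabla Y (Ev1 ev1 X u)
        - P (Ev1 ev1 (bracket X Y) u) := by
  induction u using TensorProduct.induction_on with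
  | zero => simp [nablaOn]
  | tmul ω s =>
      have h1 : Ev1 ev1 Y (ω ⊗ₜ[R] s) = ev1 Y ω • s := by simp [Ev1]
      have h2 : Ev1 ev1 X (ω ⊗ₜ[R] s) = ev1 X ω • s := by simp [Ev1]
      have h3 : Ev1 ev1 (bracket X Y) (ω ⊗ₜ[R] s) = ev1 (bracket X Y) ω • s := by
        simp [Ev1]
      rw [h1, h2, h3, hD,
        nablaOn_smul d0 ev1 Xact hXdf P nabla hLeib,
        nablaOn_smul d0 ev1 Xact hXdf P nabla hLeib]
      have hw : wedgeB wedge 1 1 LinearMap.id ω (nabla s)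
          = LinearMap.rTensor S (wedge 1 1 ω) (nabla s) := by
        simp [wedgeB]
      rw [map_add, map_zsmul]
      have hE : Ev2 ev2 X Y (d 1 ω ⊗ₜ[R] P s) = ev2 X Y (d 1 ω) • P s := by
        simp [Ev2]
      rw [hE, hw, Ev2_rTensor_wedge wedge ev1 ev2 hevw, hcartan]
      simp only [pow_one, neg_smul, one_smul, map_smul, sub_smul, nablaOn]
      abel
  | add a b ha hb =>
      simp only [map_add, nablaOn, ha, hb]
      abel

/-- For a pseudoconnection `∇` on `ξ` with principal homomorphism `P`,
vector fields `X, Y` and any `s ∈ Ω⁰(ξ)`, with `F^∇_{X,Y}(s) = Ev_{X,Y}(F^∇(s))`: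
`F^∇_{X,Y}(s) = ∇_X∇_Y(Ps) − ∇_Y∇_X(Ps) − ∇_X P(∇_Y s) + P(∇_X∇_Y s)
  + ∇_Y P(∇_X s) − P(∇_Y∇_X s) − P(∇_{[X,Y]} P(s))`. -/
theorem curvature_evaluated_on_vector_fields
    (d0 : R →ₗ[ℝ] Ω 1) (d : ∀ k, Ω k →ₗ[ℝ] Ω (k+1))
    (wedge : ∀ k l : ℕ, Ω k →ₗ[R] Ω l →ₗ[R] Ω (k + l))
    -- vector fields: evaluation of scalar forms, derivation action and Lie bracket
    (ev1 : χ → Ω 1 →ₗ[R] R) (ev2 : χ → χ → Ω 2 →ₗ[R] R)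
    (Xact : χ → R → R) (bracket : χ → χ → χ)
    (hXdf : ∀ (X : χ) (f : R), ev1 X (d0 f) = Xact X f)
    (hcartan : ∀ (X Y : χ) (ω : Ω 1),
      ev2 X Y (d 1 ω) = Xact X (ev1 Y ω) - Xact Y (ev1 X ω) - ev1 (bracket X Y) ω)
    (hevw : ∀ (X Y : χ) (ω η : Ω 1),
      ev2 X Y (wedge 1 1 ω η) = ev1 X ω * ev1 Y η - ev1 Y ω * ev1 X η)
    -- the pseudoconnection with principal homomorphism `P`
    (P : S →ₗ[R] S) (nabla : S →ₗ[ℝ] Ω 1 ⊗[R] S)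
    (hLeib : ∀ (f : R) (s : S), nabla (f • s) = d0 f ⊗ₜ[R] P s + f • nabla s)
    -- its exterior derivative, determined on generators
    (D : ∀ k, Ω k ⊗[R] S →ₗ[ℝ] Ω (k+1) ⊗[R] S)
    (hD : ∀ (k : ℕ) (ω : Ω k) (s : S),
      D k (ω ⊗ₜ[R] s) = d k ω ⊗ₜ[R] P s
        + ((-1:ℤ)^k) • wedgeB wedge k 1 LinearMap.id ω (nabla s))
    : ∀ (X Y : χ) (s : S),
      Ev2 ev2 X Y (Fmap P nabla D s)
        = nablaOn ev1 nabla X (nablaOn ev1 nabla Y (P s))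
          - nablaOn ev1 nabla Y (nablaOn ev1 nabla X (P s))
          - nablaOn ev1 nabla X (P (nablaOn ev1 nabla Y s))
          + P (nablaOn ev1 nabla X (nablaOn ev1 nabla Y s))
          + nablaOn ev1 nabla Y (P (nablaOn ev1 nabla X s))
          - P (nablaOn ev1 nabla Y (nablaOn ev1 nabla X s))
          - P (nablaOn ev1 nabla (bracket X Y) (P s)) := by
  intro X Y s
  have key := Ev2_D1 d0 d wedge ev1 ev2 Xact bracket hXdf hcartan hevw P nabla hLeib D hD X Y
  simp only [Fmap, map_add, map_sub]
  rw [Ev2_lTensor, key (nabla s), key (LinearMap.lTensor (Ω 1) P (nabla s)),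
    key (nabla (P s)), Ev1_lTensor, Ev1_lTensor, Ev1_lTensor]
  simp only [map_sub, nablaOn]
  abel

end PseudoConnections
end
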